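/- Let p be an odd prime, let φ : F_p → ℤ be the quadratic character, and let c ∈ F_p with c ≠ 0. Then #{(t,x,y,z) ∈ F_p^4 : (x,y,z) ≠ (0,0,0) and t^2 = c·x·y·z·(x+y)·(y+z)·(−x+z)} = (p−1)·(p^2 + p + 1 + φ(c)·a_3). -/

import Mathlib

/-!
For fixed `(x, y, z)` the equation `t² = c·S(x, y, z)` has `1 + φ(c·S)` solutions, so the count is
`p³ - 1 + φ(c) Σ φ(S)`; as the sextic `S` is homogeneous of even degree, `Σ φ(S) = (p - 1) T` with
`T = Σ_{x,y} φ(S(x, y, 1))`.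

If `φ(-1) = -1`, the involution `(x, y) ↦ (1/x, y/x)` multiplies `S(x, y, 1)` by `-x⁻⁶`, so `T = 0`.
If `φ(-1) = 1`, write `a₂² = Σ_{u,v} φ((u³ - u)(v³ - v))` through `σ = u + v`, `r = uv` (the fibre
of `(u, v) ↦ (σ, r)` has `1 + φ(σ² - 4r)` points) and then through `m = σ²`. All resulting sums are
Jacobsthal sums `Σ φ((x - a)(x - b))` except one; the substitution `m = (1 + r)² n` and the Cayley
transform `d = (1 - r)/(1 + r)` turn it into `Σ_λ (1 + φ(1 - λ)) φ(λ) L(λ)` for the Legendre sums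
`L(λ) = Σ_n φ(n(n - 1)(n - λ))`. Since `T = Σ_λ φ(λ(1 - λ)) L(λ)` and `Σ_λ φ(λ) L(λ) = 1`, this
gives `a₂² = 2p + T`.
-/

open Finset

namespace TwistedK3

theorem sum_comp_eq_sum_card_fiber_mul {α γ M : Type*} [Fintype α] [Fintype γ] [DecidableEq γ]
    [NonAssocSemiring M] (f : α → γ) (g : γ → M) :
    ∑ x : α, g (f x) = ∑ y : γ, (#{x | f x = y} : M) * g y := by
  rw [← Finset.sum_fiberwise univ f]
  refine Finset.sum_congr rfl fun y _ => ?_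
  rw [Finset.sum_congr rfl fun x hx => by rw [(Finset.mem_filter.mp hx).2], Finset.sum_const,
    nsmul_eq_mul]

section

variable {F : Type*} [Field F]

def sextic (x y z : F) : F := x * y * z * (x + y) * (y + z) * (-x + z)

theorem sextic_mul (s x y z : F) : sextic (s * x) (s * y) (s * z) = (s ^ 3) ^ 2 * sextic x y z := by
  unfold sextic; ring

theorem sextic_zero_right (x y : F) : sextic x y 0 = 0 := by
  simp [sextic]

variable [DecidableEq F]

-- Sending `-1` to itself makes `cayley` an involution of all of `F`; at `r = -1` both sides of
-- `one_sub_cayley_sq` vanish, the right one because `x / 0 = 0`.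
def cayley (r : F) : F := if r = -1 then -1 else (1 - r) / (1 + r)

theorem one_sub_cayley_sq (r : F) : 1 - cayley r ^ 2 = 4 * r / (1 + r) ^ 2 := by
  by_cases hr : r = -1
  · simp [cayley, hr]
  · have hr' : 1 + r ≠ 0 := fun h => hr (by linear_combination h)
    simp only [cayley, hr, if_false]
    field_simp
    ring

theorem cayley_involutive (hF : ringChar F ≠ 2) : Function.Involutive (cayley (F := F)) := by
  have h2 : (2 : F) ≠ 0 := Ring.two_ne_zero hF
  intro r
  by_cases hr : r = -1
  · simp [cayley, hr]
  · have hr' : 1 + r ≠ 0 := fun h => hr (by linear_combination h)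
    have hc : (1 - r) / (1 + r) ≠ -1 := fun h => h2 (by field_simp at h; linear_combination h)
    have hc' : 1 + (1 - r) / (1 + r) ≠ 0 := fun h => hc (by linear_combination h)
    simp only [cayley, hr, hc, if_false]
    rw [div_eq_iff hc']
    field_simp
    ring

variable [Fintype F]

local notation "φ" => quadraticChar F

theorem card_filter_sq_eq (hF : ringChar F ≠ 2) (a : F) :
    (#{t : F | t ^ 2 = a} : ℤ) = φ a + 1 := by
  rw [← quadraticChar_card_sqrts hF a, Set.toFinset_ofPred]

theorem quadraticChar_sq_mul {a : F} (ha : a ≠ 0) (b : F) : φ (a ^ 2 * b) = φ b := by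
  rw [map_mul, quadraticChar_sq_one' ha, one_mul]

theorem quadraticChar_neg_of_neg_one (h1 : φ (-1) = 1) (a : F) : φ (-a) = φ a := by
  rw [neg_eq_neg_one_mul, map_mul, h1, one_mul]

theorem sum_comp_sq (hF : ringChar F ≠ 2) (h : F → ℤ) :
    ∑ x : F, h (x ^ 2) = ∑ m : F, (φ m + 1) * h m := by
  rw [sum_comp_eq_sum_card_fiber_mul (· ^ 2) h]
  exact Finset.sum_congr rfl fun m _ => by rw [card_filter_sq_eq hF]

theorem natCard_sq_eq_sum {β : Type*} [Fintype β] (hF : ringChar F ≠ 2) (Q : β → Prop)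
    [DecidablePred Q] (g : β → F) :
    (Nat.card {v : F × β // Q v.2 ∧ v.1 ^ 2 = g v.2} : ℤ) = ∑ w with Q w, (φ (g w) + 1) := by
  rw [Nat.card_eq_fintype_card, Fintype.card_subtype, Finset.card_filter, Fintype.sum_prod_type,
    Finset.sum_comm, Finset.sum_filter]
  push_cast
  refine Finset.sum_congr rfl fun w _ => ?_
  by_cases hw : Q w
  · simp only [hw, true_and, if_true]
    rw [Finset.sum_boole, card_filter_sq_eq hF]
  · simp [hw]

theorem card_filter_add_mul_eq (hF : ringChar F ≠ 2) (y : F × F) :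
    (#{w : F × F | (w.1 + w.2, w.1 * w.2) = y} : ℤ) = φ (y.1 ^ 2 - 4 * y.2) + 1 := by
  obtain ⟨σ, r⟩ := y
  have h2 : (2 : F) ≠ 0 := Ring.two_ne_zero hF
  rw [← card_filter_sq_eq hF]
  congr 1
  refine Finset.card_nbij' (fun w => w.1 - w.2) (fun d => ((σ + d) / 2, (σ - d) / 2)) ?_ ?_ ?_ ?_
  · rintro ⟨u, v⟩ hw
    simp only [coe_filter, mem_univ, true_and, Set.mem_ofPred_eq, Prod.mk.injEq] at hw ⊢
    obtain ⟨rfl, rfl⟩ := hw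
    ring
  · intro d hd
    simp only [coe_filter, mem_univ, true_and, Set.mem_ofPred_eq, Prod.mk.injEq] at hd ⊢
    constructor
    · field_simp; ring
    · field_simp; linear_combination -hd
  · rintro ⟨u, v⟩ hw
    simp only [coe_filter, mem_univ, true_and, Set.mem_ofPred_eq, Prod.mk.injEq] at hw ⊢
    obtain ⟨rfl, -⟩ := hw
    constructor <;> field_simp <;> ring
  · intro d _
    field_simp
    ring

theorem sum_quadraticChar_sub_mul_sub (hF : ringChar F ≠ 2) (a b : F) :
    ∑ x : F, φ ((x - a) * (x - b)) = if a = b then (Fintype.card F : ℤ) - 1 else -1 := by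
  split_ifs with hab
  · subst hab
    have hx : ∀ x : F, φ ((x - a) * (x - a)) = 1 - if x = a then 1 else 0 := fun x => by
      split_ifs with h
      · simp [h]
      · rw [← sq, quadraticChar_sq_one' (sub_ne_zero.mpr h), sub_zero]
    simp [hx, Finset.sum_sub_distrib]
  · have he : b - a ≠ 0 := sub_ne_zero.mpr (Ne.symm hab)
    have hjac : ∑ y : F, φ y * φ (1 - y) = -φ (-1) := by
      have := jacobiSum_nontrivial_inv (quadraticChar_ne_one hF)
      rwa [(quadraticChar_isQuadratic F).inv] at this
    calc ∑ x : F, φ ((x - a) * (x - b))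
        = ∑ y : F, φ ((a + (b - a) * y - a) * (a + (b - a) * y - b)) :=
          (Equiv.sum_comp ((Equiv.mulLeft₀ _ he).trans (Equiv.addLeft a)) _).symm
      _ = ∑ y : F, φ (-1) * (φ y * φ (1 - y)) := Finset.sum_congr rfl fun y _ => by
          rw [← map_mul, ← map_mul, ← quadraticChar_sq_mul he (-1 * (y * (1 - y)))]
          congr 1; ring
      _ = -1 := by
          rw [← Finset.mul_sum, hjac, mul_neg, ← sq,
            quadraticChar_sq_one (neg_ne_zero.mpr one_ne_zero)]

theorem sum_quadraticChar_mul_ite_eq (hF : ringChar F ≠ 2) (r₀ : F) :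
    ∑ r : F, φ r * (if r = r₀ then (Fintype.card F : ℤ) - 1 else -1) = Fintype.card F * φ r₀ := by
  have hr : ∀ r : F, φ r * (if r = r₀ then (Fintype.card F : ℤ) - 1 else -1)
      = (if r = r₀ then Fintype.card F * φ r₀ else 0) - φ r := fun r => by
    split_ifs with h
    · rw [h]; ring
    · ring
  rw [Finset.sum_congr rfl fun r _ => hr r, Finset.sum_sub_distrib, Finset.sum_ite_eq',
    if_pos (mem_univ _), quadraticChar_sum_zero hF, sub_zero]

theorem sum_quadraticChar_sextic_slice {z : F} (hz : z ≠ 0) :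
    ∑ x : F, ∑ y : F, φ (sextic x y z) = ∑ x : F, ∑ y : F, φ (sextic x y 1) := by
  rw [← Equiv.sum_comp (Equiv.mulLeft₀ z hz)]
  refine Finset.sum_congr rfl fun x _ => ?_
  rw [← Equiv.sum_comp (Equiv.mulLeft₀ z hz)]
  refine Finset.sum_congr rfl fun y _ => ?_
  simp only [Equiv.mulLeft₀_apply]
  rw [← quadraticChar_sq_mul (pow_ne_zero 3 hz) (sextic x y 1), ← sextic_mul, mul_one]

theorem sum_quadraticChar_sextic :
    ∑ w : F × F × F, φ (sextic w.1 w.2.1 w.2.2)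
      = (Fintype.card F - 1) * ∑ x : F, ∑ y : F, φ (sextic x y 1) := by
  have hswap : ∀ x : F, ∑ y : F, ∑ z : F, φ (sextic x y z) = ∑ z : F, ∑ y : F, φ (sextic x y z) :=
    fun x => Finset.sum_comm
  simp only [Fintype.sum_prod_type]
  rw [Finset.sum_congr rfl fun x _ => hswap x, Finset.sum_comm,
    ← Finset.add_sum_erase _ _ (mem_univ 0),
    Finset.sum_congr rfl fun z hz => sum_quadraticChar_sextic_slice (ne_of_mem_erase hz),
    Finset.sum_erase_eq_sub (mem_univ 0)]
  simp only [sextic_zero_right, MulChar.map_zero, Finset.sum_const_zero, Finset.sum_const,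
    Finset.card_univ, nsmul_eq_mul]
  ring

theorem natCard_twisted_sextic (hF : ringChar F ≠ 2) (c : F) :
    (Nat.card {v : F × F × F × F //
        (v.2.1, v.2.2.1, v.2.2.2) ≠ (0, 0, 0) ∧
        v.1 ^ 2 = c * v.2.1 * v.2.2.1 * v.2.2.2 * (v.2.1 + v.2.2.1) *
          (v.2.2.1 + v.2.2.2) * (-v.2.1 + v.2.2.2)} : ℤ) =
      (Fintype.card F - 1) *
        (Fintype.card F ^ 2 + Fintype.card F + 1 + φ c * ∑ x : F, ∑ y : F, φ (sextic x y 1)) := by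
  have hc : ∀ w : F × F × F, c * w.1 * w.2.1 * w.2.2 * (w.1 + w.2.1) * (w.2.1 + w.2.2) *
      (-w.1 + w.2.2) = c * sextic w.1 w.2.1 w.2.2 := fun w => by unfold sextic; ring
  refine (natCard_sq_eq_sum hF (fun w : F × F × F => (w.1, w.2.1, w.2.2) ≠ (0, 0, 0))
    fun w => c * w.1 * w.2.1 * w.2.2 * (w.1 + w.2.1) * (w.2.1 + w.2.2) * (-w.1 + w.2.2)).trans ?_
  simp only [Prod.mk_zero_zero, Prod.mk.eta]
  rw [Finset.filter_ne', Finset.sum_erase_eq_sub (mem_univ 0), Finset.sum_add_distrib]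
  simp only [hc, map_mul, ← Finset.mul_sum, sum_quadraticChar_sextic, Prod.snd_zero,
    MulChar.map_zero, Finset.sum_const, Finset.card_univ, Fintype.card_prod,
    nsmul_eq_mul]
  push_cast
  ring

theorem natCard_sq_eq_cube_sub_self (hF : ringChar F ≠ 2) :
    (Nat.card {xy : F × F // xy.2 ^ 2 = xy.1 ^ 3 - xy.1} : ℤ)
      = Fintype.card F + ∑ x : F, φ (x ^ 3 - x) := by
  have e : {xy : F × F // xy.2 ^ 2 = xy.1 ^ 3 - xy.1}
      ≃ {v : F × F // True ∧ v.1 ^ 2 = v.2 ^ 3 - v.2} :=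
    (Equiv.prodComm F F).subtypeEquiv fun _ => by simp
  rw [Nat.card_congr e, natCard_sq_eq_sum hF (fun _ => True) (fun x => x ^ 3 - x),
    Finset.filter_true, Finset.sum_add_distrib]
  simp [Finset.card_univ, add_comm]

theorem sum_quadraticChar_sextic_one_eq_zero (h1 : φ (-1) = -1) :
    ∑ x : F, ∑ y : F, φ (sextic x y 1) = 0 := by
  let σ : F × F → F × F := fun w => if w.1 = 0 then w else (w.1⁻¹, w.2 * w.1⁻¹)
  have hσ : Function.Involutive σ := by
    rintro ⟨x, y⟩
    by_cases hx : x = 0 <;> simp [σ, hx]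
  have hflip : ∀ w : F × F, φ (sextic (σ w).1 (σ w).2 1) = -φ (sextic w.1 w.2 1) := by
    rintro ⟨x, y⟩
    by_cases hx : x = 0
    · simp [σ, hx, sextic]
    · have : sextic x y 1 = (x ^ 3) ^ 2 * (-1 * sextic x⁻¹ (y * x⁻¹) 1) := by
        unfold sextic; field_simp; ring
      simp only [σ, hx, if_false, this, quadraticChar_sq_mul (pow_ne_zero 3 hx), map_mul, h1]
      ring
  have hsum := Equiv.sum_comp hσ.toPerm fun w => φ (sextic w.1 w.2 1)
  simp only [Function.Involutive.coe_toPerm, hflip, Finset.sum_neg_distrib] at hsum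
  rw [← Fintype.sum_prod_type']
  linarith

noncomputable def legendreSum (l : F) : ℤ := ∑ n : F, φ (n * (n - 1) * (n - l))

theorem sum_quadraticChar_mul_legendreSum (hF : ringChar F ≠ 2) (h1 : φ (-1) = 1) :
    ∑ l : F, φ l * legendreSum l = 1 := by
  have hinner : ∀ n : F, ∑ l : F, φ l * φ (n * (n - 1) * (n - l)) = -φ ((n - 0) * (n - 1)) := by
    intro n
    have hl : ∀ l : F, φ l * φ (n * (n - 1) * (n - l))
        = φ (n * (n - 1)) * φ ((l - 0) * (l - n)) := fun l => by
      rw [← map_mul, ← map_mul, ← quadraticChar_neg_of_neg_one h1]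
      congr 1; ring
    rw [Finset.sum_congr rfl fun l _ => hl l, ← Finset.mul_sum, sum_quadraticChar_sub_mul_sub hF]
    split_ifs with hn
    · simp [← hn]
    · simp
  simp only [legendreSum, Finset.mul_sum]
  rw [Finset.sum_comm, Finset.sum_congr rfl fun n _ => hinner n, Finset.sum_neg_distrib,
    sum_quadraticChar_sub_mul_sub hF, if_neg zero_ne_one, neg_neg]

theorem sum_quadraticChar_sextic_one_eq_sum_legendreSum (h1 : φ (-1) = 1) :
    ∑ x : F, ∑ y : F, φ (sextic x y 1) = ∑ l : F, φ (l * (1 - l)) * legendreSum l := by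
  refine Finset.sum_congr rfl fun l _ => ?_
  rw [legendreSum, Finset.mul_sum, ← Equiv.sum_comp (Equiv.neg F)]
  refine Finset.sum_congr rfl fun n _ => ?_
  rw [← map_mul, ← quadraticChar_neg_of_neg_one h1]
  simp only [Equiv.neg_apply, sextic]
  congr 1; ring

theorem sq_sum_quadraticChar_cubic (hF : ringChar F ≠ 2) :
    (∑ u : F, φ (u ^ 3 - u)) ^ 2
      = ∑ y : F × F, (φ (y.1 ^ 2 - 4 * y.2) + 1) * φ (y.2 * ((1 + y.2) ^ 2 - y.1 ^ 2)) := by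
  let G : F × F → ℤ := fun y => φ (y.2 * ((1 + y.2) ^ 2 - y.1 ^ 2))
  calc (∑ u : F, φ (u ^ 3 - u)) ^ 2
      = ∑ w : F × F, G (w.1 + w.2, w.1 * w.2) := by
        rw [sq, Fintype.sum_mul_sum, ← Fintype.sum_prod_type']
        refine Finset.sum_congr rfl fun w _ => ?_
        rw [← map_mul]
        congr 1; ring
    _ = _ := by
        rw [sum_comp_eq_sum_card_fiber_mul (fun w : F × F => (w.1 + w.2, w.1 * w.2)) G]
        exact Finset.sum_congr rfl fun y _ => by rw [card_filter_add_mul_eq hF]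

theorem sum_quadraticChar_mul_one_add_sq_sub_sq (hF : ringChar F ≠ 2) (h1 : φ (-1) = 1) :
    ∑ y : F × F, φ (y.2 * ((1 + y.2) ^ 2 - y.1 ^ 2)) = Fintype.card F := by
  have hr : ∀ r : F, ∑ σ : F, φ (r * ((1 + r) ^ 2 - σ ^ 2))
      = φ r * (if r = -1 then (Fintype.card F : ℤ) - 1 else -1) := by
    intro r
    have hσ : ∀ σ : F, φ (r * ((1 + r) ^ 2 - σ ^ 2)) = φ r * φ ((σ - (1 + r)) * (σ - -(1 + r))) :=
      fun σ => by
        rw [← map_mul, ← quadraticChar_neg_of_neg_one h1]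
        congr 1; ring
    have hiff : 1 + r = -(1 + r) ↔ r = -1 := by
      rw [eq_neg_iff_add_eq_zero, ← two_mul, mul_eq_zero, or_iff_right (Ring.two_ne_zero hF),
        add_eq_zero_iff_neg_eq, eq_comm]
    rw [Finset.sum_congr rfl fun σ _ => hσ σ, ← Finset.mul_sum, sum_quadraticChar_sub_mul_sub hF]
    simp only [hiff]
  rw [Fintype.sum_prod_type_right, Finset.sum_congr rfl fun r _ => hr r,
    sum_quadraticChar_mul_ite_eq hF, h1, mul_one]

theorem sum_quadraticChar_sub_mul_one_add_sq_sub (hF : ringChar F ≠ 2) (h1 : φ (-1) = 1) :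
    ∑ r : F, ∑ m : F, φ ((m - 4 * r) * (r * ((1 + r) ^ 2 - m))) = Fintype.card F := by
  have hr : ∀ r : F, ∑ m : F, φ ((m - 4 * r) * (r * ((1 + r) ^ 2 - m)))
      = φ r * (if r = 1 then (Fintype.card F : ℤ) - 1 else -1) := by
    intro r
    have hm : ∀ m : F, φ ((m - 4 * r) * (r * ((1 + r) ^ 2 - m)))
        = φ r * φ ((m - 4 * r) * (m - (1 + r) ^ 2)) := fun m => by
      rw [← map_mul, ← quadraticChar_neg_of_neg_one h1]
      congr 1; ring
    have hiff : 4 * r = (1 + r) ^ 2 ↔ r = 1 := by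
      rw [eq_comm, ← sub_eq_zero, show (1 + r) ^ 2 - 4 * r = (r - 1) ^ 2 by ring, sq_eq_zero_iff,
        sub_eq_zero]
    rw [Finset.sum_congr rfl fun m _ => hm m, ← Finset.mul_sum, sum_quadraticChar_sub_mul_sub hF]
    simp only [hiff]
  rw [Finset.sum_congr rfl fun r _ => hr r, sum_quadraticChar_mul_ite_eq hF, map_one, mul_one]

theorem sum_quadraticChar_mul_sub_mul_one_add_sq_sub (hF : ringChar F ≠ 2) (h1 : φ (-1) = 1)
    (r : F) :
    ∑ m : F, φ (m * ((m - 4 * r) * (r * ((1 + r) ^ 2 - m))))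
      = φ (4 * r / (1 + r) ^ 2) * legendreSum (4 * r / (1 + r) ^ 2) - if r = -1 then 1 else 0 := by
  by_cases hr : r = -1
  · have hm : ∀ m : F, φ (m * ((m - 4 * r) * (r * ((1 + r) ^ 2 - m))))
        = φ (m + 4) - if m = 0 then 1 else 0 := fun m => by
      subst hr
      split_ifs with hm
      · rw [hm, zero_mul, zero_add, MulChar.map_zero, show (4 : F) = 2 ^ 2 by norm_num,
          quadraticChar_sq_one' (Ring.two_ne_zero hF), sub_self]
      · rw [sub_zero, ← quadraticChar_sq_mul hm (m + 4)]
        congr 1; ring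
    have hshift : ∑ m : F, φ (m + 4) = 0 := by
      rw [← quadraticChar_sum_zero hF]
      exact Fintype.sum_equiv (Equiv.addRight 4) _ _ fun _ => rfl
    rw [Finset.sum_congr rfl fun m _ => hm m, Finset.sum_sub_distrib, hshift]
    simp [hr]
  · have hw : 1 + r ≠ 0 := fun h => hr (by linear_combination h)
    set μ := 4 * r / (1 + r) ^ 2 with hμ
    have hμw : μ * (1 + r) ^ 2 = 4 * r := by rw [hμ]; field_simp
    have hφμ : φ μ = φ r := by
      rw [hμ, show 4 * r / (1 + r) ^ 2 = (2 / (1 + r)) ^ 2 * r by field_simp; ring,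
        quadraticChar_sq_mul (div_ne_zero (Ring.two_ne_zero hF) hw)]
    clear_value μ
    have hn : ∀ n : F, φ ((1 + r) ^ 2 * n * (((1 + r) ^ 2 * n - 4 * r) *
        (r * ((1 + r) ^ 2 - (1 + r) ^ 2 * n)))) = φ r * φ (n * (n - 1) * (n - μ)) := fun n => by
      rw [← map_mul, ← quadraticChar_neg_of_neg_one h1 (r * _),
        ← quadraticChar_sq_mul (pow_ne_zero 3 hw) (-(r * (n * (n - 1) * (n - μ))))]
      congr 1
      linear_combination ((1 + r) ^ 4 * r * n * (1 - n)) * hμw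
    rw [if_neg hr, sub_zero, hφμ, legendreSum, Finset.mul_sum,
      ← Equiv.sum_comp (Equiv.mulLeft₀ _ (pow_ne_zero 2 hw))]
    exact Finset.sum_congr rfl fun n _ => hn n

theorem sum_sum_quadraticChar_mul_sub_mul_one_add_sq_sub (hF : ringChar F ≠ 2) (h1 : φ (-1) = 1) :
    ∑ r : F, ∑ m : F, φ (m * ((m - 4 * r) * (r * ((1 + r) ^ 2 - m))))
      = ∑ l : F, φ (l * (1 - l)) * legendreSum l := by
  let g : F → ℤ := fun l => φ l * legendreSum l
  calc ∑ r : F, ∑ m : F, φ (m * ((m - 4 * r) * (r * ((1 + r) ^ 2 - m))))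
      = ∑ r : F, g (1 - cayley r ^ 2) - 1 := by
        simp only [sum_quadraticChar_mul_sub_mul_one_add_sq_sub hF h1, one_sub_cayley_sq,
          Finset.sum_sub_distrib, Finset.sum_ite_eq', mem_univ, if_true, g]
    _ = ∑ d : F, g (1 - d ^ 2) - 1 := by
        rw [Fintype.sum_equiv (cayley_involutive hF).toPerm (fun r => g (1 - cayley r ^ 2))
          (fun d => g (1 - d ^ 2)) fun _ => rfl]
    _ = ∑ l : F, (φ (1 - l) + 1) * g l - 1 := by
        rw [sum_comp_sq hF fun m => g (1 - m), ← Equiv.sum_comp (Equiv.subLeft 1)]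
        simp only [Equiv.subLeft_apply, sub_sub_cancel]
    _ = ∑ l : F, φ (l * (1 - l)) * legendreSum l := by
        simp only [g, add_mul, one_mul, Finset.sum_add_distrib,
          sum_quadraticChar_mul_legendreSum hF h1, map_mul, add_sub_cancel_right]
        exact Finset.sum_congr rfl fun _ _ => by ring

theorem sum_quadraticChar_discr_mul_one_add_sq_sub_sq (hF : ringChar F ≠ 2) (h1 : φ (-1) = 1) :
    ∑ y : F × F, φ (y.1 ^ 2 - 4 * y.2) * φ (y.2 * ((1 + y.2) ^ 2 - y.1 ^ 2))
      = Fintype.card F + ∑ l : F, φ (l * (1 - l)) * legendreSum l := by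
  have hr : ∀ r : F, ∑ σ : F, φ (σ ^ 2 - 4 * r) * φ (r * ((1 + r) ^ 2 - σ ^ 2))
      = ∑ m : F, φ (m * ((m - 4 * r) * (r * ((1 + r) ^ 2 - m))))
        + ∑ m : F, φ ((m - 4 * r) * (r * ((1 + r) ^ 2 - m))) := by
    intro r
    simp only [← map_mul]
    rw [sum_comp_sq hF fun m => φ ((m - 4 * r) * (r * ((1 + r) ^ 2 - m))), ← Finset.sum_add_distrib]
    simp only [add_mul, one_mul, map_mul]
  rw [Fintype.sum_prod_type_right, Finset.sum_congr rfl fun r _ => hr r, Finset.sum_add_distrib,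
    sum_sum_quadraticChar_mul_sub_mul_one_add_sq_sub hF h1,
    sum_quadraticChar_sub_mul_one_add_sq_sub hF h1, add_comm]

theorem sum_quadraticChar_sextic_one_eq_sq_sub (hF : ringChar F ≠ 2) (h1 : φ (-1) = 1) :
    ∑ x : F, ∑ y : F, φ (sextic x y 1) = (∑ u : F, φ (u ^ 3 - u)) ^ 2 - 2 * Fintype.card F := by
  rw [sq_sum_quadraticChar_cubic hF]
  simp only [add_mul, one_mul, Finset.sum_add_distrib]
  rw [sum_quadraticChar_discr_mul_one_add_sq_sub_sq hF h1,
    sum_quadraticChar_mul_one_add_sq_sub_sq hF h1,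
    sum_quadraticChar_sextic_one_eq_sum_legendreSum h1]
  ring

end

end TwistedK3

open TwistedK3

theorem statement13_general (p : ℕ) [Fact p.Prime] (hodd : Odd p)
    (c : ZMod p)
    (a2 : ℤ)
    (ha2 : a2 = p - Nat.card {xy : ZMod p × ZMod p // xy.2 ^ 2 = xy.1 ^ 3 - xy.1})
    (a3 : ℤ)
    (ha31 : p % 4 = 1 → a3 = a2 ^ 2 - 2 * p)
    (ha33 : p % 4 = 3 → a3 = 0) :
    (Nat.card {v : ZMod p × ZMod p × ZMod p × ZMod p //
        (v.2.1, v.2.2.1, v.2.2.2) ≠ (0, 0, 0) ∧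
        v.1 ^ 2 = c * v.2.1 * v.2.2.1 * v.2.2.2 * (v.2.1 + v.2.2.1) *
          (v.2.2.1 + v.2.2.2) * (-v.2.1 + v.2.2.2)} : ℤ) =
      (p - 1) * (p ^ 2 + p + 1 + quadraticChar (ZMod p) c * a3) := by
  have hF : ringChar (ZMod p) ≠ 2 := by
    rw [ZMod.ringChar_zmod_n]
    rintro rfl
    exact Nat.not_odd_iff_even.mpr even_two hodd
  rw [natCard_twisted_sextic hF, ZMod.card]
  suffices hT : ∑ x : ZMod p, ∑ y : ZMod p, quadraticChar (ZMod p) (sextic x y 1) = a3 by rw [hT]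
  rcases Nat.odd_mod_four_iff.mp (Nat.odd_iff.mp hodd) with h4 | h4
  · have h1 : quadraticChar (ZMod p) (-1) = 1 := by
      rw [quadraticChar_neg_one hF, ZMod.card, ZMod.χ₄_nat_one_mod_four h4]
    rw [sum_quadraticChar_sextic_one_eq_sq_sub hF h1, ha31 h4, ha2, natCard_sq_eq_cube_sub_self hF,
      ZMod.card]
    ring
  · have h1 : quadraticChar (ZMod p) (-1) = -1 := by
      rw [quadraticChar_neg_one hF, ZMod.card, ZMod.χ₄_nat_three_mod_four h4]
    rw [ha33 h4, sum_quadraticChar_sextic_one_eq_zero h1]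

/-- from the proof of Proposition 4.6 of the paper.
Let `p` be an odd prime, `φ` the quadratic character of `F_p`, `c ∈ F_p` with `c ≠ 0`,
`a₂ = p − #{(x,y) : y² = x³ − x}`, and `a₃ = a₂² − 2p` if `p ≡ 1 (mod 4)`, `a₃ = 0` if
`p ≡ 3 (mod 4)`.  Then the number of `(t,x,y,z) ∈ F_p⁴` with `(x,y,z) ≠ (0,0,0)` and
`t² = c·x·y·z·(x+y)·(y+z)·(−x+z)` equals `(p−1)·(p² + p + 1 + φ(c)·a₃)`. -/
theorem statement13 (p : ℕ) [Fact p.Prime] (hodd : Odd p)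
    (c : ZMod p) (hc : c ≠ 0)
    (a2 : ℤ)
    (ha2 : a2 = p - Nat.card {xy : ZMod p × ZMod p // xy.2 ^ 2 = xy.1 ^ 3 - xy.1})
    (a3 : ℤ)
    (ha31 : p % 4 = 1 → a3 = a2 ^ 2 - 2 * p)
    (ha33 : p % 4 = 3 → a3 = 0) :
    (Nat.card {v : ZMod p × ZMod p × ZMod p × ZMod p //
        (v.2.1, v.2.2.1, v.2.2.2) ≠ (0, 0, 0) ∧
        v.1 ^ 2 = c * v.2.1 * v.2.2.1 * v.2.2.2 * (v.2.1 + v.2.2.1) *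
          (v.2.2.1 + v.2.2.2) * (-v.2.1 + v.2.2.2)} : ℤ) =
      (p - 1) * (p ^ 2 + p + 1 + quadraticChar (ZMod p) c * a3) :=
  statement13_general p hodd c a2 ha2 a3 ha31 ha33
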